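/- arXiv:1211.1498 — 2 statements merged into one kernel-verified Lean document; each statement's English description precedes it below -/
import Mathlib

section
/- There is a universal constant M > 0 (independent of p, λ, f; one may take M = 8) with the following property. Let λ : ℤ → ℝ be strictly increasing with λ_n → ±∞ as n → ±∞ and let f : ℤ → ℂ. Then the cubic spline Φ₂f is an admissible 2-extension of f, with associated second derivative the function G defined by G(x) = f[λ_{n−1},λ_n,λ_{n+1}]·q''((λ_n − x)/h_{n−1}) for μ_{n−1} < x < λ_n and G(x) = f[λ_{n−1},λ_n,λ_{n+1}]·q''((x − λ_n)/h_n) for λ_n < x < μ_n, and for every real p with 1 ≤ p < ∞ one has ∫_ℝ |G(t)|^p dt ≤ M^p ∑_{n∈ℤ} (λ_{n+2} − λ_n)|f[λ_n,λ_{n+1},λ_{n+2}]|^p. -/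
open MeasureTheory
open scoped ENNReal NNReal

/-- `lam` is a strictly increasing sequence tending to `-∞` at `-∞` and `+∞` at `+∞`. -/
def GoodSeq (lam : ℤ → ℝ) : Prop :=
  StrictMono lam ∧ Filter.Tendsto lam Filter.atBot Filter.atBot ∧
    Filter.Tendsto lam Filter.atTop Filter.atTop

/-- `F` is an admissible `r`-extension of `f : ℤ → ℂ`, with associated `r`-th derivative `G`:
`F` is `(r-1)` times continuously differentiable, `G` is locally integrable,
`F^{(r-1)}(b) - F^{(r-1)}(a) = ∫_a^b G` for all `a ≤ b`, and `F (lam n) = f n` for all `n`. -/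
def AdmissibleExt (r : ℕ) (lam : ℤ → ℝ) (f : ℤ → ℂ) (F G : ℝ → ℂ) : Prop :=
  ContDiff ℝ (r - 1 : ℕ) F ∧ MeasureTheory.LocallyIntegrable G volume ∧
  (∀ a b : ℝ, a ≤ b →
      iteratedDeriv (r - 1) F b - iteratedDeriv (r - 1) F a = ∫ t in a..b, G t) ∧
  (∀ n : ℤ, F (lam n) = f n)

/-- Homogeneous trace seminorm `‖f‖_{L^r_p|Λ}`, valued in `[0,∞]`. -/
noncomputable def traceL (r : ℕ) (p : ℝ) (lam : ℤ → ℝ) (f : ℤ → ℂ) : ℝ≥0∞ :=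
  ⨅ (F : ℝ → ℂ) (G : ℝ → ℂ) (_ : AdmissibleExt r lam f F G),
    (∫⁻ t, ENNReal.ofReal (‖G t‖ ^ p)) ^ (1 / p)

/-- Trace norm `‖f‖_{W^r_p|Λ}`, valued in `[0,∞]`. -/
noncomputable def traceW (r : ℕ) (p : ℝ) (lam : ℤ → ℝ) (f : ℤ → ℂ) : ℝ≥0∞ :=
  ⨅ (F : ℝ → ℂ) (G : ℝ → ℂ) (_ : AdmissibleExt r lam f F G),
    ((∫⁻ t, ENNReal.ofReal (‖F t‖ ^ p)) +
      (∫⁻ t, ENNReal.ofReal (‖G t‖ ^ p))) ^ (1 / p)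

/-- First order divided difference `f[λ_n, λ_{n+1}]`. -/
noncomputable def dd1 (lam : ℤ → ℝ) (f : ℤ → ℂ) (n : ℤ) : ℂ :=
  (f (n + 1) - f n) / ((lam (n + 1) - lam n : ℝ) : ℂ)

/-- Second order divided difference `f[λ_n, λ_{n+1}, λ_{n+2}]`. -/
noncomputable def dd2 (lam : ℤ → ℝ) (f : ℤ → ℂ) (n : ℤ) : ℂ :=
  (dd1 lam f (n + 1) - dd1 lam f n) / ((lam (n + 2) - lam n : ℝ) : ℂ)

/-- Divided difference `f[λ_n, …, λ_{n+k}]` of order `k`. -/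
noncomputable def ddiv (lam : ℤ → ℝ) (f : ℤ → ℂ) (n : ℤ) (k : ℕ) : ℂ :=
  ∑ i ∈ Finset.range (k + 1),
    f (n + (i : ℤ)) /
      ∏ j ∈ (Finset.range (k + 1)).erase i,
        ((lam (n + (i : ℤ)) - lam (n + (j : ℤ)) : ℝ) : ℂ)

/-- Divided difference of values `v` at (distinct) points `x`. -/
noncomputable def ddPts {m : ℕ} (x : Fin m → ℝ) (v : Fin m → ℂ) : ℂ :=
  ∑ i, v i / ∏ j ∈ Finset.univ.erase i, ((x i - x j : ℝ) : ℂ)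

/-- `F` is of class `W^r` on `[a,b]` with `r`-th derivative `G`. -/
def ClassW (r : ℕ) (a b : ℝ) (F G : ℝ → ℂ) : Prop :=
  ContDiffOn ℝ (r - 1 : ℕ) F (Set.Icc a b) ∧ MeasureTheory.IntegrableOn G (Set.Icc a b) ∧
  ∀ x y : ℝ, a ≤ x → x ≤ y → y ≤ b →
    iteratedDerivWithin (r - 1) F (Set.Icc a b) y -
      iteratedDerivWithin (r - 1) F (Set.Icc a b) x = ∫ t in x..y, G t

/-- `‖f‖_{eq,L}^p`, valued in `[0,∞]`. -/
noncomputable def eqLp (r : ℕ) (p : ℝ) (lam : ℤ → ℝ) (f : ℤ → ℂ) : ℝ≥0∞ :=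
  ∑' n : ℤ, ENNReal.ofReal ((lam (n + (r : ℤ)) - lam n) * ‖ddiv lam f n r‖ ^ p)

/-- `‖f‖_{eq,W}^p`, valued in `[0,∞]`. -/
noncomputable def eqWp (r : ℕ) (p : ℝ) (lam : ℤ → ℝ) (f : ℤ → ℂ) : ℝ≥0∞ :=
  eqLp r p lam f +
    ∑ j ∈ Finset.range r, ∑' n : ℤ,
      ENNReal.ofReal ((lam (n + (r : ℤ)) - lam n) ^ ((j : ℝ) * p + 1) *
        ‖ddiv lam f n j‖ ^ p)

/-- The cubic `q(x) = 4(x² - x³)`. -/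
noncomputable def qcub : ℝ → ℝ := fun x => 4 * (x ^ 2 - x ^ 3)

/-- `α_n(f) = (h_n f[λ_{n-1},λ_n] + h_{n-1} f[λ_n,λ_{n+1}])/(h_{n-1}+h_n)`. -/
noncomputable def alphaN (lam : ℤ → ℝ) (f : ℤ → ℂ) (n : ℤ) : ℂ :=
  (((lam (n + 1) - lam n : ℝ) : ℂ) * dd1 lam f (n - 1) +
      ((lam n - lam (n - 1) : ℝ) : ℂ) * dd1 lam f n) /
    ((lam (n + 1) - lam (n - 1) : ℝ) : ℂ)

/-- The formula for `Φ₁ f` on `[λ_n, λ_{n+1}]`. -/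
noncomputable def phi1P (lam : ℤ → ℝ) (f : ℤ → ℂ) (n : ℤ) (x : ℝ) : ℂ :=
  f n * (((lam (n + 1) - x) / (lam (n + 1) - lam n) : ℝ) : ℂ) +
    f (n + 1) * (((x - lam n) / (lam (n + 1) - lam n) : ℝ) : ℂ)

/-- The formula for `Φ₂ f` on `[μ_{n-1}, λ_n]`. -/
noncomputable def phi2L (lam : ℤ → ℝ) (f : ℤ → ℂ) (n : ℤ) (x : ℝ) : ℂ :=
  f n + alphaN lam f n * ((x - lam n : ℝ) : ℂ) +
    (((lam n - lam (n - 1)) ^ 2 : ℝ) : ℂ) * dd2 lam f (n - 1) *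
      ((qcub ((lam n - x) / (lam n - lam (n - 1))) : ℝ) : ℂ)

/-- The formula for `Φ₂ f` on `[λ_n, μ_n]`. -/
noncomputable def phi2R (lam : ℤ → ℝ) (f : ℤ → ℂ) (n : ℤ) (x : ℝ) : ℂ :=
  f n + alphaN lam f n * ((x - lam n : ℝ) : ℂ) +
    (((lam (n + 1) - lam n) ^ 2 : ℝ) : ℂ) * dd2 lam f (n - 1) *
      ((qcub ((x - lam n) / (lam (n + 1) - lam n)) : ℝ) : ℂ)

/-!
On each interval between consecutive points of `λ_n < μ_n < λ_{n+1} < ⋯`, `Φ₂f` is a cubic.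
Neighbouring cubics have the same derivative where they meet: `α_n` at `λ_n` because `q'(0) = 0`,
and `f[λ_n, λ_{n+1}]` at `μ_n` because `q'(1/2) = 1`. Hence `Φ₂f` is `C¹`, and `(Φ₂f)'` is
differentiable with derivative `G` off the countable set of knots, which gives the fundamental
theorem of calculus for `(Φ₂f)'`. On `[μ_n, μ_{n+1}]`, an interval of length `(λ_{n+2} - λ_n)/2`,
one has `|G| ≤ 8 |f[λ_n, λ_{n+1}, λ_{n+2}]|` since `|q''| ≤ 8` on `[0, 1/2]`; summing over `n`
gives the `L^p` bound with `M = 8`.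
-/

open Set Filter

section Gluing

variable {E : Type*} [NormedAddCommGroup E] [NormedSpace ℝ E]

theorem HasDerivAt.of_eqOn_Icc_Icc {F P Q : ℝ → E} {a x b : ℝ} {d : E} (ha : a < x)
    (hb : x < b) (hP : EqOn F P (Icc a x)) (hQ : EqOn F Q (Icc x b))
    (hPd : HasDerivAt P d x) (hQd : HasDerivAt Q d x) : HasDerivAt F d x := by
  have hL : HasDerivWithinAt F d (Iic x) x :=
    (hPd.hasDerivWithinAt.congr hP (hP ⟨ha.le, le_rfl⟩)).mono_of_mem_nhdsWithin
      (Icc_mem_nhdsLE ha)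
  have hR : HasDerivWithinAt F d (Ici x) x :=
    (hQd.hasDerivWithinAt.congr hQ (hQ ⟨le_rfl, hb.le⟩)).mono_of_mem_nhdsWithin
      (Icc_mem_nhdsGE hb)
  simpa using hL.union hR

theorem ContinuousAt.of_eqOn_Icc_Icc {X : Type*} [TopologicalSpace X] {g p q : ℝ → X}
    {a x b : ℝ} (ha : a < x) (hb : x < b) (hp : EqOn g p (Icc a x)) (hq : EqOn g q (Icc x b))
    (hpc : ContinuousAt p x) (hqc : ContinuousAt q x) : ContinuousAt g x :=
  continuousAt_iff_continuous_left_right.mpr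
    ⟨(hpc.continuousWithinAt.congr hp (hp ⟨ha.le, le_rfl⟩)).mono_of_mem_nhdsWithin
        (Icc_mem_nhdsLE ha),
      (hqc.continuousWithinAt.congr hq (hq ⟨le_rfl, hb.le⟩)).mono_of_mem_nhdsWithin
        (Icc_mem_nhdsGE hb)⟩

end Gluing

section Piecewise

variable {E : Type*} [NormedAddCommGroup E] {t : ℤ → ℝ} {F G : ℝ → E} {P P' P'' : ℤ → ℝ → E}

theorem intervalIntegrable_of_piecewise (ht : ∀ k, t k < t (k + 1))
    (hP'' : ∀ k, Continuous (P'' k)) (hG : ∀ k, EqOn G (P'' k) (Ioo (t k) (t (k + 1))))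
    (k : ℤ) : IntervalIntegrable G volume (t k) (t (k + 1)) :=
  (intervalIntegrable_iff_integrableOn_Ioo_of_le (ht k).le).mpr
    (((hP'' k).integrableOn_Icc.mono_set Ioo_subset_Icc_self).congr_fun (hG k).symm
      measurableSet_Ioo)

theorem locallyIntegrable_of_piecewise (ht : ∀ k, t k < t (k + 1))
    (hcover : ∀ x, ∃ k, x ∈ Ico (t k) (t (k + 1)))
    (hP'' : ∀ k, Continuous (P'' k)) (hG : ∀ k, EqOn G (P'' k) (Ioo (t k) (t (k + 1)))) :
    LocallyIntegrable G := by
  intro x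
  obtain ⟨k, hk₁, hk₂⟩ := hcover x
  have hcell := intervalIntegrable_of_piecewise ht hP'' hG
  have hlo : t (k - 1) < x := (by simpa using ht (k - 1) : t (k - 1) < t k).trans_le hk₁
  refine ⟨Icc (t (k - 1)) (t (k + 1)), Icc_mem_nhds hlo hk₂, ?_⟩
  refine (intervalIntegrable_iff_integrableOn_Icc_of_le (hlo.le.trans hk₂.le)).mp ?_
  have hleft := hcell (k - 1)
  rw [sub_add_cancel] at hleft
  exact hleft.trans (hcell k)

variable [NormedSpace ℝ E]

theorem hasDerivAt_of_piecewise (ht : ∀ k, t k < t (k + 1))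
    (hP : ∀ k x, HasDerivAt (P k) (P' k x) x) (hF : ∀ k, EqOn F (P k) (Icc (t k) (t (k + 1))))
    (hjoin : ∀ k, P' k (t (k + 1)) = P' (k + 1) (t (k + 1))) {k : ℤ} {x : ℝ}
    (hx : x ∈ Icc (t k) (t (k + 1))) : HasDerivAt F (P' k x) x := by
  have knot : ∀ j, HasDerivAt F (P' j (t (j + 1))) (t (j + 1)) := fun j =>
    .of_eqOn_Icc_Icc (ht j) (ht (j + 1)) (hF j) (hF (j + 1)) (hP j _)
      (hjoin j ▸ hP (j + 1) _)
  rcases hx.1.eq_or_lt with rfl | hlo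
  · have h := hjoin (k - 1) ▸ knot (k - 1)
    rwa [sub_add_cancel] at h
  rcases hx.2.eq_or_lt with rfl | hhi
  · exact knot k
  exact .of_eqOn_Icc_Icc hlo hhi ((hF k).mono (Icc_subset_Icc_right hx.2))
    ((hF k).mono (Icc_subset_Icc_left hx.1)) (hP k x) (hP k x)

theorem deriv_eqOn_of_piecewise (ht : ∀ k, t k < t (k + 1))
    (hP : ∀ k x, HasDerivAt (P k) (P' k x) x) (hF : ∀ k, EqOn F (P k) (Icc (t k) (t (k + 1))))
    (hjoin : ∀ k, P' k (t (k + 1)) = P' (k + 1) (t (k + 1))) (k : ℤ) :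
    EqOn (deriv F) (P' k) (Icc (t k) (t (k + 1))) := fun _ hx =>
  (hasDerivAt_of_piecewise ht hP hF hjoin hx).deriv

theorem continuous_deriv_of_piecewise (ht : ∀ k, t k < t (k + 1))
    (hcover : ∀ x, ∃ k, x ∈ Ico (t k) (t (k + 1)))
    (hP : ∀ k x, HasDerivAt (P k) (P' k x) x) (hP' : ∀ k x, HasDerivAt (P' k) (P'' k x) x)
    (hF : ∀ k, EqOn F (P k) (Icc (t k) (t (k + 1))))
    (hjoin : ∀ k, P' k (t (k + 1)) = P' (k + 1) (t (k + 1))) : Continuous (deriv F) := by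
  have hD := deriv_eqOn_of_piecewise ht hP hF hjoin
  have hc : ∀ j y, ContinuousAt (P' j) y := fun j y => (hP' j y).continuousAt
  refine continuous_iff_continuousAt.mpr fun x => ?_
  obtain ⟨k, hk₁, hk₂⟩ := hcover x
  rcases hk₁.eq_or_lt with rfl | hlo
  · have h := hD (k - 1)
    rw [sub_add_cancel] at h
    exact .of_eqOn_Icc_Icc (by simpa using ht (k - 1)) hk₂ h (hD k) (hc _ _) (hc _ _)
  · exact .of_eqOn_Icc_Icc hlo hk₂ ((hD k).mono (Icc_subset_Icc_right hk₂.le))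
      ((hD k).mono (Icc_subset_Icc_left hk₁)) (hc k x) (hc k x)

theorem contDiff_one_of_piecewise (ht : ∀ k, t k < t (k + 1))
    (hcover : ∀ x, ∃ k, x ∈ Ico (t k) (t (k + 1)))
    (hP : ∀ k x, HasDerivAt (P k) (P' k x) x) (hP' : ∀ k x, HasDerivAt (P' k) (P'' k x) x)
    (hF : ∀ k, EqOn F (P k) (Icc (t k) (t (k + 1))))
    (hjoin : ∀ k, P' k (t (k + 1)) = P' (k + 1) (t (k + 1))) : ContDiff ℝ 1 F := by
  refine contDiff_one_iff_deriv.mpr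
    ⟨fun x => ?_, continuous_deriv_of_piecewise ht hcover hP hP' hF hjoin⟩
  obtain ⟨k, hx⟩ := hcover x
  exact (hasDerivAt_of_piecewise ht hP hF hjoin (Ico_subset_Icc_self hx)).differentiableAt

theorem hasDerivAt_deriv_of_piecewise (ht : ∀ k, t k < t (k + 1))
    (hP : ∀ k x, HasDerivAt (P k) (P' k x) x) (hP' : ∀ k x, HasDerivAt (P' k) (P'' k x) x)
    (hF : ∀ k, EqOn F (P k) (Icc (t k) (t (k + 1))))
    (hjoin : ∀ k, P' k (t (k + 1)) = P' (k + 1) (t (k + 1)))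
    (hG : ∀ k, EqOn G (P'' k) (Ioo (t k) (t (k + 1)))) {k : ℤ} {x : ℝ}
    (hx : x ∈ Ioo (t k) (t (k + 1))) : HasDerivAt (deriv F) (G x) x := by
  rw [hG k hx]
  exact (hP' k x).congr_of_eventuallyEq <| eventually_of_mem (Ioo_mem_nhds hx.1 hx.2)
    fun y hy => deriv_eqOn_of_piecewise ht hP hF hjoin k (Ioo_subset_Icc_self hy)

theorem deriv_sub_deriv_eq_integral_of_piecewise [CompleteSpace E] (ht : ∀ k, t k < t (k + 1))
    (hcover : ∀ x, ∃ k, x ∈ Ico (t k) (t (k + 1)))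
    (hP : ∀ k x, HasDerivAt (P k) (P' k x) x) (hP' : ∀ k x, HasDerivAt (P' k) (P'' k x) x)
    (hP'' : ∀ k, Continuous (P'' k)) (hF : ∀ k, EqOn F (P k) (Icc (t k) (t (k + 1))))
    (hjoin : ∀ k, P' k (t (k + 1)) = P' (k + 1) (t (k + 1)))
    (hG : ∀ k, EqOn G (P'' k) (Ioo (t k) (t (k + 1)))) {a b : ℝ} (hab : a ≤ b) :
    deriv F b - deriv F a = ∫ x in a..b, G x := by
  refine (integral_eq_of_hasDerivAt_off_countable_of_le _ _ hab (countable_range t)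
    (continuous_deriv_of_piecewise ht hcover hP hP' hF hjoin).continuousOn (fun x hx => ?_)
    ((locallyIntegrable_of_piecewise ht hcover hP'' hG).integrableOn_isCompact
      isCompact_uIcc).intervalIntegrable).symm
  obtain ⟨k, hk₁, hk₂⟩ := hcover x
  exact hasDerivAt_deriv_of_piecewise ht hP hP' hF hjoin hG
    ⟨hk₁.lt_of_ne fun h => hx.2 ⟨k, h⟩, hk₂⟩

end Piecewise

theorem lintegral_rpow_norm_le_tsum {E : Type*} [NormedAddCommGroup E] {c : ℤ → ℝ}
    (hc : Monotone c) (hcover : ∀ x, ∃ n, x ∈ Ico (c n) (c (n + 1))) {g : ℝ → E} {B : ℤ → ℝ}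
    {p : ℝ} (hp : 0 ≤ p) (hbound : ∀ n, ∀ᵐ x, x ∈ Ico (c n) (c (n + 1)) → ‖g x‖ ≤ B n) :
    ∫⁻ x, ENNReal.ofReal (‖g x‖ ^ p) ≤ ∑' n, ENNReal.ofReal ((c (n + 1) - c n) * B n ^ p) := by
  have hdisj : Pairwise (Function.onFun Disjoint fun n => Ico (c n) (c (n + 1))) := by
    simpa using hc.pairwise_disjoint_on_Ico_succ
  rw [← setLIntegral_univ, ← iUnion_eq_univ_iff.mpr hcover,
    lintegral_iUnion (fun _ => measurableSet_Ico) hdisj]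
  refine ENNReal.tsum_le_tsum fun n => ?_
  calc ∫⁻ x in Ico (c n) (c (n + 1)), ENNReal.ofReal (‖g x‖ ^ p)
      ≤ ∫⁻ _ in Ico (c n) (c (n + 1)), ENNReal.ofReal (B n ^ p) :=
        setLIntegral_mono_ae measurable_const.aemeasurable <| (hbound n).mono fun x hx hmem =>
          ENNReal.ofReal_le_ofReal (Real.rpow_le_rpow (norm_nonneg _) (hx hmem) hp)
    _ = ENNReal.ofReal ((c (n + 1) - c n) * B n ^ p) := by
      rw [setLIntegral_const, Real.volume_Ico, mul_comm,
        ENNReal.ofReal_mul (sub_nonneg.mpr (hc (lt_add_one n).le))]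

section Cover

variable {a b : ℤ → ℝ}

theorem exists_mem_Ico_of_goodSeq {lam : ℤ → ℝ} (hlam : GoodSeq lam) (x : ℝ) :
    ∃ n, x ∈ Ico (lam n) (lam (n + 1)) := by
  obtain ⟨hmono, hbot, htop⟩ := hlam
  have hne : ∃ n, lam n ≤ x := (hbot.eventually (eventually_le_atBot x)).exists
  obtain ⟨N, hN⟩ := eventually_atTop.mp (htop.eventually (eventually_gt_atTop x))
  have hbdd : ∃ N, ∀ n, lam n ≤ x → n ≤ N :=
    ⟨N, fun n hn => not_lt.mp fun h => (hN n h.le).not_ge hn⟩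
  obtain ⟨n, hn, hmax⟩ := Int.exists_greatest_of_bdd hbdd hne
  exact ⟨n, hn, not_le.mp fun h => by simpa using hmax (n + 1) h⟩

theorem exists_mem_Ico_of_interlaced (hab : ∀ n, a n ≤ b n) (hba : ∀ n, b n ≤ a (n + 1))
    (ha : ∀ x, ∃ n, x ∈ Ico (a n) (a (n + 1))) (x : ℝ) : ∃ n, x ∈ Ico (b n) (b (n + 1)) := by
  obtain ⟨n, hn₁, hn₂⟩ := ha x
  rcases lt_or_ge x (b n) with hx | hx
  · exact ⟨n - 1, (by simpa using hba (n - 1) : b (n - 1) ≤ a n).trans hn₁, by simpa using hx⟩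
  · exact ⟨n, hx, hn₂.trans_le (hab (n + 1))⟩

end Cover

section Interleave

variable {α : Type*}

def interleave (a b : ℤ → α) (k : ℤ) : α := if Even k then a (k / 2) else b (k / 2)

variable (a b : ℤ → α) (n : ℤ)

@[simp] theorem interleave_two_mul : interleave a b (2 * n) = a n := by
  simp [interleave]

@[simp] theorem interleave_two_mul_add_one : interleave a b (2 * n + 1) = b n := by
  rw [interleave, if_neg (Int.not_even_two_mul_add_one n)]
  congr
  omega

@[simp] theorem interleave_two_mul_add_one_add_one :
    interleave a b (2 * n + 1 + 1) = a (n + 1) := by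
  rw [add_assoc, one_add_one_eq_two, ← mul_add_one, interleave_two_mul]

theorem interleave_lt_interleave_add_one {a b : ℤ → ℝ} (hab : ∀ n, a n < b n)
    (hba : ∀ n, b n < a (n + 1)) (k : ℤ) : interleave a b k < interleave a b (k + 1) := by
  obtain ⟨n, rfl | rfl⟩ := Int.even_or_odd' k <;> simp [hab, hba]

theorem exists_mem_Ico_interleave {a b : ℤ → ℝ} (ha : ∀ x, ∃ n, x ∈ Ico (a n) (a (n + 1)))
    (x : ℝ) :
    ∃ k, x ∈ Ico (interleave a b k) (interleave a b (k + 1)) := by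
  obtain ⟨n, hn₁, hn₂⟩ := ha x
  rcases lt_or_ge x (b n) with hx | hx
  · exact ⟨2 * n, by simpa using ⟨hn₁, hx⟩⟩
  · exact ⟨2 * n + 1, by simpa using ⟨hx, hn₂⟩⟩

end Interleave

section Cubic

noncomputable def qcub' (u : ℝ) : ℝ := 8 * u - 12 * u ^ 2

noncomputable def qcub'' (u : ℝ) : ℝ := 8 - 24 * u

theorem hasDerivAt_qcub (u : ℝ) : HasDerivAt qcub (qcub' u) u := by
  have h := ((hasDerivAt_pow 2 u).sub (hasDerivAt_pow 3 u)).const_mul (4 : ℝ)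
  exact h.congr_deriv (by norm_num [qcub']; ring)

theorem hasDerivAt_qcub' (u : ℝ) : HasDerivAt qcub' (qcub'' u) u := by
  have h := ((hasDerivAt_id u).const_mul (8 : ℝ)).sub ((hasDerivAt_pow 2 u).const_mul (12 : ℝ))
  exact h.congr_deriv (by norm_num [qcub'']; ring)

theorem deriv_deriv_qcub : deriv (deriv qcub) = qcub'' := by
  rw [funext fun u => (hasDerivAt_qcub u).deriv]
  exact funext fun u => (hasDerivAt_qcub' u).deriv

@[fun_prop]
theorem continuous_qcub'' : Continuous qcub'' := by
  unfold qcub''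
  fun_prop

theorem abs_qcub''_le {u : ℝ} (h₀ : 0 ≤ u) (h₁ : u ≤ 1 / 2) : |qcub'' u| ≤ 8 := by
  rw [abs_le, qcub'']
  constructor <;> linarith

theorem norm_mul_qcub''_le {d : ℂ} {u : ℝ} (h₀ : 0 ≤ u) (h₁ : u ≤ 1 / 2) :
    ‖d * (qcub'' u : ℂ)‖ ≤ 8 * ‖d‖ := by
  rw [norm_mul, Complex.norm_real, Real.norm_eq_abs, mul_comm]
  exact mul_le_mul_of_nonneg_right (abs_qcub''_le h₀ h₁) (norm_nonneg d)

end Cubic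

section SplinePiece

variable (c : ℝ) (v a d : ℂ) {h : ℝ}

noncomputable def splinePiece (h x : ℝ) : ℂ :=
  v + a * ((x - c : ℝ) : ℂ) + ((h ^ 2 : ℝ) : ℂ) * d * ((qcub ((x - c) / h) : ℝ) : ℂ)

noncomputable def splinePiece' (h x : ℝ) : ℂ :=
  a + (h : ℂ) * d * ((qcub' ((x - c) / h) : ℝ) : ℂ)

theorem hasDerivAt_splinePiece (hh : h ≠ 0) (x : ℝ) :
    HasDerivAt (splinePiece c v a d h) (splinePiece' c a d h x) x := by
  have hu : HasDerivAt (fun y => (y - c) / h) (1 / h) x :=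
    ((hasDerivAt_id x).sub_const c).div_const h
  have hq := ((hasDerivAt_qcub _).comp x hu).ofReal_comp
  have hl : HasDerivAt (fun y : ℝ => ((y - c : ℝ) : ℂ)) 1 x := by
    simpa using ((hasDerivAt_id x).sub_const c).ofReal_comp
  refine (((hl.const_mul a).const_add v).add
    (hq.const_mul (((h ^ 2 : ℝ) : ℂ) * d))).congr_deriv ?_
  have hh' : (h : ℂ) ≠ 0 := Complex.ofReal_ne_zero.mpr hh
  simp only [splinePiece']
  push_cast
  field_simp

theorem hasDerivAt_splinePiece' (hh : h ≠ 0) (x : ℝ) :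
    HasDerivAt (splinePiece' c a d h) (d * (qcub'' ((x - c) / h) : ℂ)) x := by
  have hu : HasDerivAt (fun y => (y - c) / h) (1 / h) x :=
    ((hasDerivAt_id x).sub_const c).div_const h
  have hq := ((hasDerivAt_qcub' _).comp x hu).ofReal_comp
  refine ((hq.const_mul ((h : ℂ) * d)).const_add a).congr_deriv ?_
  have hh' : (h : ℂ) ≠ 0 := Complex.ofReal_ne_zero.mpr hh
  push_cast
  field_simp

@[simp] theorem splinePiece_self : splinePiece c v a d h c = v := by
  simp [splinePiece, qcub]

@[simp] theorem splinePiece'_self : splinePiece' c a d h c = a := by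
  simp [splinePiece', qcub']

theorem splinePiece'_add_half (hh : h ≠ 0) : splinePiece' c a d h (c + h / 2) = a + h * d := by
  have hu : (c + h / 2 - c) / h = 1 / 2 := by field_simp; ring
  simp only [splinePiece', hu, qcub']
  push_cast
  ring

end SplinePiece

theorem sub_div_sub_flip (a b x : ℝ) : (a - x) / (a - b) = (x - a) / (b - a) := by
  rw [← neg_sub x a, ← neg_sub b a, neg_div_neg_eq]

section Phi2

variable {lam : ℤ → ℝ} {f : ℤ → ℂ} {F G : ℝ → ℂ}

def IsPhi2 (lam : ℤ → ℝ) (f : ℤ → ℂ) (F : ℝ → ℂ) : Prop :=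
  (∀ n x, (lam (n - 1) + lam n) / 2 ≤ x → x ≤ lam n → F x = phi2L lam f n x) ∧
    ∀ n x, lam n ≤ x → x ≤ (lam n + lam (n + 1)) / 2 → F x = phi2R lam f n x

def IsPhi2Deriv2 (lam : ℤ → ℝ) (f : ℤ → ℂ) (G : ℝ → ℂ) : Prop :=
  (∀ n x, (lam (n - 1) + lam n) / 2 < x → x < lam n →
      G x = dd2 lam f (n - 1) *
        ((deriv (deriv qcub) ((lam n - x) / (lam n - lam (n - 1))) : ℝ) : ℂ)) ∧
    ∀ n x, lam n < x → x < (lam n + lam (n + 1)) / 2 →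
      G x = dd2 lam f (n - 1) *
        ((deriv (deriv qcub) ((x - lam n) / (lam (n + 1) - lam n)) : ℝ) : ℂ)

theorem phi2R_eq_splinePiece (n : ℤ) :
    phi2R lam f n =
      splinePiece (lam n) (f n) (alphaN lam f n) (dd2 lam f (n - 1)) (lam (n + 1) - lam n) :=
  rfl

theorem phi2L_eq_splinePiece (n : ℤ) :
    phi2L lam f n =
      splinePiece (lam n) (f n) (alphaN lam f n) (dd2 lam f (n - 1)) (lam (n - 1) - lam n) := by
  ext x
  rw [phi2L, splinePiece, sub_div_sub_flip, sub_sq_comm (lam n)]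

theorem alphaN_add_mul_dd2 (hlam : StrictMono lam) (n : ℤ) :
    alphaN lam f n + ((lam (n + 1) - lam n : ℝ) : ℂ) * dd2 lam f (n - 1) = dd1 lam f n := by
  have h₁ : (lam n : ℂ) - lam (n - 1) ≠ 0 := by
    exact_mod_cast (sub_pos.mpr (hlam (sub_one_lt n))).ne'
  have h₂ : (lam (n + 1) : ℂ) - lam n ≠ 0 := by
    exact_mod_cast (sub_pos.mpr (hlam (lt_add_one n))).ne'
  have h₃ : (lam (n + 1) : ℂ) - lam (n - 1) ≠ 0 := by
    exact_mod_cast (sub_pos.mpr (hlam (by omega : n - 1 < n + 1))).ne'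
  simp only [alphaN, dd2, dd1, sub_add_cancel, show n - 1 + 2 = n + 1 by ring]
  push_cast
  field_simp
  ring

theorem alphaN_add_one_sub_mul_dd2 (hlam : StrictMono lam) (n : ℤ) :
    alphaN lam f (n + 1) - ((lam (n + 1) - lam n : ℝ) : ℂ) * dd2 lam f n = dd1 lam f n := by
  have h₁ : (lam (n + 1) : ℂ) - lam n ≠ 0 := by
    exact_mod_cast (sub_pos.mpr (hlam (lt_add_one n))).ne'
  have h₂ : (lam (n + 2) : ℂ) - lam (n + 1) ≠ 0 := by
    exact_mod_cast (sub_pos.mpr (hlam (by omega : n + 1 < n + 2))).ne'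
  have h₃ : (lam (n + 2) : ℂ) - lam n ≠ 0 := by
    exact_mod_cast (sub_pos.mpr (hlam (by omega : n < n + 2))).ne'
  simp only [alphaN, dd2, dd1, add_sub_cancel_right, show n + 1 + 1 = n + 2 by ring]
  push_cast
  field_simp
  ring

/-- The knots `λ_n` (at `2n`) and `μ_n` (at `2n + 1`) merged into one increasing sequence;
`phi2Piece k` is the cubic formula for `Φ₂f` between knots `k` and `k + 1`. -/
noncomputable def phi2Knot (lam : ℤ → ℝ) : ℤ → ℝ :=
  interleave lam fun n => (lam n + lam (n + 1)) / 2

noncomputable def phi2Piece (lam : ℤ → ℝ) (f : ℤ → ℂ) : ℤ → ℝ → ℂ :=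
  interleave (phi2R lam f) fun n => phi2L lam f (n + 1)

noncomputable def phi2Piece' (lam : ℤ → ℝ) (f : ℤ → ℂ) : ℤ → ℝ → ℂ :=
  interleave
    (fun n => splinePiece' (lam n) (alphaN lam f n) (dd2 lam f (n - 1)) (lam (n + 1) - lam n))
    fun n => splinePiece' (lam (n + 1)) (alphaN lam f (n + 1)) (dd2 lam f n) (lam n - lam (n + 1))

noncomputable def phi2Piece'' (lam : ℤ → ℝ) (f : ℤ → ℂ) : ℤ → ℝ → ℂ :=
  interleave (fun n x => dd2 lam f (n - 1) * (qcub'' ((x - lam n) / (lam (n + 1) - lam n)) : ℂ))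
    fun n x => dd2 lam f n * (qcub'' ((x - lam (n + 1)) / (lam n - lam (n + 1))) : ℂ)

theorem phi2Knot_lt_add_one (hlam : StrictMono lam) (k : ℤ) :
    phi2Knot lam k < phi2Knot lam (k + 1) :=
  interleave_lt_interleave_add_one (fun n => by linarith [hlam (lt_add_one n)])
    (fun n => by linarith [hlam (lt_add_one n)]) k

theorem exists_mem_Ico_phi2Knot (hlam : GoodSeq lam) (x : ℝ) :
    ∃ k, x ∈ Ico (phi2Knot lam k) (phi2Knot lam (k + 1)) :=
  exists_mem_Ico_interleave (exists_mem_Ico_of_goodSeq hlam) x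

theorem hasDerivAt_phi2Piece (hlam : StrictMono lam) (k : ℤ) (x : ℝ) :
    HasDerivAt (phi2Piece lam f k) (phi2Piece' lam f k x) x := by
  have hne : ∀ n, lam (n + 1) - lam n ≠ 0 := fun n => (sub_pos.mpr (hlam (lt_add_one n))).ne'
  obtain ⟨n, rfl | rfl⟩ := Int.even_or_odd' k
  · simpa [phi2Piece, phi2Piece', phi2R_eq_splinePiece] using
      hasDerivAt_splinePiece _ _ _ _ (hne n) x
  · simpa [phi2Piece, phi2Piece', phi2L_eq_splinePiece] using
      hasDerivAt_splinePiece _ _ _ _ (sub_ne_zero.mpr (hne n).symm) x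

theorem hasDerivAt_phi2Piece' (hlam : StrictMono lam) (k : ℤ) (x : ℝ) :
    HasDerivAt (phi2Piece' lam f k) (phi2Piece'' lam f k x) x := by
  have hne : ∀ n, lam (n + 1) - lam n ≠ 0 := fun n => (sub_pos.mpr (hlam (lt_add_one n))).ne'
  obtain ⟨n, rfl | rfl⟩ := Int.even_or_odd' k
  · simpa [phi2Piece', phi2Piece''] using hasDerivAt_splinePiece' _ _ _ (hne n) x
  · simpa [phi2Piece', phi2Piece''] using
      hasDerivAt_splinePiece' _ _ _ (sub_ne_zero.mpr (hne n).symm) x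

theorem continuous_phi2Piece'' (k : ℤ) : Continuous (phi2Piece'' lam f k) := by
  obtain ⟨n, rfl | rfl⟩ := Int.even_or_odd' k <;>
    simp only [phi2Piece'', interleave_two_mul, interleave_two_mul_add_one] <;>
    fun_prop

theorem phi2Piece'_join (hlam : StrictMono lam) (k : ℤ) :
    phi2Piece' lam f k (phi2Knot lam (k + 1)) =
      phi2Piece' lam f (k + 1) (phi2Knot lam (k + 1)) := by
  obtain ⟨n, rfl | rfl⟩ := Int.even_or_odd' k
  · have hne : lam (n + 1) - lam n ≠ 0 := (sub_pos.mpr (hlam (lt_add_one n))).ne'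
    have hne' : lam n - lam (n + 1) ≠ 0 := (sub_neg.mpr (hlam (lt_add_one n))).ne
    simp only [phi2Piece', phi2Knot, interleave_two_mul, interleave_two_mul_add_one]
    -- `μ_n` is the midpoint of both cells meeting there, where `q'(1/2) = 1`
    rw [show (lam n + lam (n + 1)) / 2 = lam n + (lam (n + 1) - lam n) / 2 by ring,
      splinePiece'_add_half _ _ _ hne,
      show lam n + (lam (n + 1) - lam n) / 2 = lam (n + 1) + (lam n - lam (n + 1)) / 2 by ring,
      splinePiece'_add_half _ _ _ hne',
      alphaN_add_mul_dd2 hlam, ← alphaN_add_one_sub_mul_dd2 hlam n]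
    push_cast
    ring
  · simp [phi2Piece', phi2Knot]

theorem admissibleExt_two_of_isPhi2 (hlam : GoodSeq lam)
    (hF : IsPhi2 lam f F) (hG : IsPhi2Deriv2 lam f G) :
    AdmissibleExt 2 lam f F G := by
  obtain ⟨hFL, hFR⟩ := hF
  obtain ⟨hGL, hGR⟩ := hG
  have ht := phi2Knot_lt_add_one hlam.1
  have hcover := exists_mem_Ico_phi2Knot hlam
  have hP := hasDerivAt_phi2Piece (f := f) hlam.1
  have hP' := hasDerivAt_phi2Piece' (f := f) hlam.1
  have hjoin := phi2Piece'_join (f := f) hlam.1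
  have hF : ∀ k, EqOn F (phi2Piece lam f k) (Icc (phi2Knot lam k) (phi2Knot lam (k + 1))) := by
    intro k x hx
    obtain ⟨n, rfl | rfl⟩ := Int.even_or_odd' k
    · simp only [phi2Knot, phi2Piece, interleave_two_mul, interleave_two_mul_add_one] at hx ⊢
      exact hFR n x hx.1 hx.2
    · simp only [phi2Knot, phi2Piece, interleave_two_mul_add_one,
        interleave_two_mul_add_one_add_one] at hx ⊢
      exact hFL (n + 1) x (by simpa using hx.1) hx.2
  have hG :
      ∀ k, EqOn G (phi2Piece'' lam f k) (Ioo (phi2Knot lam k) (phi2Knot lam (k + 1))) := by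
    intro k x hx
    obtain ⟨n, rfl | rfl⟩ := Int.even_or_odd' k
    · simp only [phi2Knot, phi2Piece'', interleave_two_mul, interleave_two_mul_add_one] at hx ⊢
      rw [hGR n x hx.1 hx.2, deriv_deriv_qcub]
    · simp only [phi2Knot, phi2Piece'', interleave_two_mul_add_one,
        interleave_two_mul_add_one_add_one] at hx ⊢
      rw [hGL (n + 1) x (by simpa using hx.1) hx.2, deriv_deriv_qcub, add_sub_cancel_right,
        sub_div_sub_flip]
  refine ⟨by simpa using contDiff_one_of_piecewise ht hcover hP hP' hF hjoin,
    locallyIntegrable_of_piecewise ht hcover continuous_phi2Piece'' hG, fun a b hab => ?_,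
    fun n => ?_⟩
  · simpa [iteratedDeriv_one] using deriv_sub_deriv_eq_integral_of_piecewise ht hcover hP hP'
      continuous_phi2Piece'' hF hjoin hG hab
  · rw [hFR n (lam n) le_rfl (by linarith [hlam.1 (lt_add_one n)]), phi2R_eq_splinePiece,
      splinePiece_self]

theorem ae_norm_le_of_isPhi2Deriv2 (hlam : StrictMono lam)
    (hG : IsPhi2Deriv2 lam f G) (n : ℤ) :
    ∀ᵐ x, x ∈ Ico ((lam n + lam (n + 1)) / 2) ((lam (n + 1) + lam (n + 1 + 1)) / 2) →
      ‖G x‖ ≤ 8 * ‖dd2 lam f n‖ := by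
  obtain ⟨hGL, hGR⟩ := hG
  have h₀ := hlam (lt_add_one n)
  have h₁ := hlam (lt_add_one (n + 1))
  filter_upwards [((finite_singleton (lam (n + 1))).insert
    ((lam n + lam (n + 1)) / 2)).countable.ae_notMem volume] with x hxS hx
  simp only [mem_insert_iff, mem_singleton_iff, not_or] at hxS
  rw [deriv_deriv_qcub] at hGL hGR
  rcases lt_or_gt_of_ne hxS.2 with hlt | hgt
  · have hx₁ := lt_of_le_of_ne hx.1 (Ne.symm hxS.1)
    rw [hGL (n + 1) x (by simpa using hx₁) hlt, add_sub_cancel_right]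
    refine norm_mul_qcub''_le (div_nonneg (by linarith) (by linarith)) ?_
    rw [div_le_iff₀ (by linarith)]
    linarith
  · rw [hGR (n + 1) x hgt hx.2, add_sub_cancel_right]
    refine norm_mul_qcub''_le (div_nonneg (by linarith) (by linarith)) ?_
    rw [div_le_iff₀ (by linarith)]
    linarith [hx.2]

theorem lintegral_rpow_norm_le_of_isPhi2Deriv2 (hlam : GoodSeq lam)
    (hG : IsPhi2Deriv2 lam f G)
    {p : ℝ} (hp : 0 ≤ p) :
    ∫⁻ t, ENNReal.ofReal (‖G t‖ ^ p) ≤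
      ENNReal.ofReal (8 ^ p) *
        ∑' n : ℤ, ENNReal.ofReal ((lam (n + 2) - lam n) * ‖dd2 lam f n‖ ^ p) := by
  have hlt : ∀ n, lam n < lam (n + 1) := fun n => hlam.1 (lt_add_one n)
  have hmid : Monotone fun n => (lam n + lam (n + 1)) / 2 := fun m n h => by
    have := hlam.1.monotone h
    have := hlam.1.monotone (by omega : m + 1 ≤ n + 1)
    dsimp only
    linarith
  have hcover := exists_mem_Ico_of_interlaced (b := fun n => (lam n + lam (n + 1)) / 2)
    (fun n => by linarith [hlt n]) (fun n => by linarith [hlt n]) (exists_mem_Ico_of_goodSeq hlam)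
  rw [← ENNReal.tsum_mul_left]
  refine (lintegral_rpow_norm_le_tsum hmid hcover hp (ae_norm_le_of_isPhi2Deriv2 hlam.1 hG)).trans
    (ENNReal.tsum_le_tsum fun n => ?_)
  have h8 : (0 : ℝ) ≤ 8 ^ p := Real.rpow_nonneg (by norm_num) p
  have hd : 0 ≤ ‖dd2 lam f n‖ ^ p := Real.rpow_nonneg (norm_nonneg _) p
  have hL : 0 ≤ lam (n + 2) - lam n := sub_nonneg.mpr (hlam.1.monotone (by omega))
  rw [← ENNReal.ofReal_mul h8, Real.mul_rpow (by norm_num) (norm_nonneg _),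
    show n + 1 + 1 = n + 2 by ring]
  refine ENNReal.ofReal_le_ofReal ?_
  nlinarith [mul_nonneg hL (mul_nonneg h8 hd)]

end Phi2

/-- there is a universal constant `M > 0` such that the cubic spline `Φ₂ f` is an
admissible 2-extension of `f` with second derivative `G` given by the indicated piecewise
formula, and `∫_ℝ |G|^p ≤ M^p ∑_n (λ_{n+2}-λ_n)|f[λ_n,λ_{n+1},λ_{n+2}]|^p`. -/
theorem stmt3 :
    ∃ M : ℝ, 0 < M ∧
      ∀ lam : ℤ → ℝ, GoodSeq lam → ∀ f : ℤ → ℂ, ∀ F G : ℝ → ℂ,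
        (∀ n : ℤ, ∀ x : ℝ, (lam (n - 1) + lam n) / 2 ≤ x → x ≤ lam n →
          F x = phi2L lam f n x) →
        (∀ n : ℤ, ∀ x : ℝ, lam n ≤ x → x ≤ (lam n + lam (n + 1)) / 2 →
          F x = phi2R lam f n x) →
        (∀ n : ℤ, ∀ x : ℝ, (lam (n - 1) + lam n) / 2 < x → x < lam n →
          G x = dd2 lam f (n - 1) *
            ((deriv (deriv qcub) ((lam n - x) / (lam n - lam (n - 1))) : ℝ) : ℂ)) →
        (∀ n : ℤ, ∀ x : ℝ, lam n < x → x < (lam n + lam (n + 1)) / 2 →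
          G x = dd2 lam f (n - 1) *
            ((deriv (deriv qcub) ((x - lam n) / (lam (n + 1) - lam n)) : ℝ) : ℂ)) →
        AdmissibleExt 2 lam f F G ∧
        ∀ p : ℝ, 1 ≤ p →
          (∫⁻ t, ENNReal.ofReal (‖G t‖ ^ p)) ≤
            ENNReal.ofReal (M ^ p) *
              ∑' n : ℤ, ENNReal.ofReal ((lam (n + 2) - lam n) *
                ‖dd2 lam f n‖ ^ p) :=
  ⟨8, by norm_num, fun _ hlam _ _ _ hFL hFR hGL hGR =>
    ⟨admissibleExt_two_of_isPhi2 hlam ⟨hFL, hFR⟩ ⟨hGL, hGR⟩, fun _ hp =>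
      lintegral_rpow_norm_le_of_isPhi2Deriv2 hlam ⟨hGL, hGR⟩ (zero_le_one.trans hp)⟩⟩
end

section
/- For every K > 0 there exist constants 0 < c ≤ C depending only on K such that for every real p with 1 ≤ p < ∞, every strictly increasing sequence λ : ℤ → ℝ with λ_n → ±∞ as n → ±∞ and λ_{n+1} − λ_n ≤ K for all n, and every f : ℤ → ℂ, the trace norm satisfies c·(∑_{n∈ℤ} (λ_{n+1} − λ_n)|f[λ_n,λ_{n+1}]|^p + ∑_{n∈ℤ} (λ_{n+1} − λ_n)|f_n|^p)^{1/p} ≤ ‖f‖_{W^1_p|Λ} ≤ C·(∑_{n∈ℤ} (λ_{n+1} − λ_n)|f[λ_n,λ_{n+1}]|^p + ∑_{n∈ℤ} (λ_{n+1} − λ_n)|f_n|^p)^{1/p}, both sides interpreted in [0,∞]. -/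
/-!
Both inequalities are proved cell by cell on the intervals `[λ_n, λ_{n+1}]`, of lengths
`h_n ≤ K`. For any admissible extension `F` with derivative `G`, Hölder's inequality on a cell
gives `h_n |f[λ_n, λ_{n+1}]|^p ≤ ∫ |G|^p`, and `|f_n| ≤ |F t| + ∫ |G|` for `t` in the cell gives
`h_n |f_n|^p ≤ 2^{p-1} (∫ |F|^p + h_n^p ∫ |G|^p)`. Conversely, the piecewise linear interpolant
of `f` is admissible with derivative `f[λ_n, λ_{n+1}]` on the `n`-th cell, and the same two bounds
hold for it in reverse. Both directions come out with the constant `2 max(1, K)`.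
-/

open MeasureTheory
open scoped ENNReal NNReal

open Set

lemma ofReal_norm_rpow {E : Type*} [SeminormedAddGroup E] {p : ℝ} (hp : 0 ≤ p) (x : E) :
    ENNReal.ofReal (‖x‖ ^ p) = ‖x‖ₑ ^ p := by
  rw [← ENNReal.ofReal_rpow_of_nonneg (norm_nonneg x) hp, ofReal_norm]

lemma ENNReal.rpow_eq_mul_rpow_sub_one {p : ℝ} (hp : 1 ≤ p) (x : ℝ≥0∞) :
    x ^ p = x * x ^ (p - 1) := by
  simpa using ENNReal.rpow_add_of_nonneg (x := x) 1 (p - 1) zero_le_one (by linarith)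

lemma ENNReal.rpow_one_div_le_mul {p : ℝ} (hp : 0 < p) {X Y c : ℝ≥0∞} (h : X ≤ c ^ p * Y) :
    X ^ (1 / p) ≤ c * Y ^ (1 / p) :=
  calc X ^ (1 / p) ≤ (c ^ p * Y) ^ (1 / p) := ENNReal.rpow_le_rpow h (by positivity)
    _ = c * Y ^ (1 / p) := by
      rw [ENNReal.mul_rpow_of_nonneg _ _ (by positivity), ← ENNReal.rpow_mul,
        mul_one_div_cancel hp.ne', ENNReal.rpow_one]

lemma rpow_lintegral_enorm_le {α E : Type*} [MeasurableSpace α] [NormedAddCommGroup E]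
    {μ : Measure α} {p : ℝ} (hp : 1 ≤ p) {g : α → E} (hg : AEStronglyMeasurable g μ) :
    (∫⁻ x, ‖g x‖ₑ ∂μ) ^ p ≤ μ univ ^ (p - 1) * ∫⁻ x, ‖g x‖ₑ ^ p ∂μ := by
  have hp0 : 0 < p := one_pos.trans_le hp
  have h := eLpNorm'_le_eLpNorm'_mul_rpow_measure_univ one_pos hp hg
  simp only [eLpNorm', ENNReal.rpow_one, div_one] at h
  calc (∫⁻ x, ‖g x‖ₑ ∂μ) ^ p
      ≤ ((∫⁻ x, ‖g x‖ₑ ^ p ∂μ) ^ (1 / p) * μ univ ^ (1 - 1 / p)) ^ p :=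
        ENNReal.rpow_le_rpow h hp0.le
    _ = μ univ ^ (p - 1) * ∫⁻ x, ‖g x‖ₑ ^ p ∂μ := by
        rw [ENNReal.mul_rpow_of_nonneg _ _ hp0.le, ← ENNReal.rpow_mul, ← ENNReal.rpow_mul,
          one_div_mul_cancel hp0.ne', ENNReal.rpow_one, sub_mul, one_div_mul_cancel hp0.ne',
          one_mul, mul_comm]

lemma add_le_two_mul_rpow_mul_add {p : ℝ} (hp : 1 ≤ p) {M X Y A B : ℝ≥0∞} (hM : 1 ≤ M)
    (hX : X ≤ B) (hY : Y ≤ 2 ^ (p - 1) * (A + M ^ p * B)) :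
    X + Y ≤ (2 * M) ^ p * (A + B) := by
  have h2 : 1 ≤ (2 : ℝ≥0∞) ^ (p - 1) := by
    simpa using ENNReal.rpow_le_rpow (one_le_two : (1 : ℝ≥0∞) ≤ 2) (sub_nonneg.2 hp)
  have hMp : 1 ≤ M ^ p := ENNReal.one_le_rpow hM (by linarith)
  set c := (2 : ℝ≥0∞) ^ (p - 1) * M ^ p
  have hc : 1 ≤ c := one_le_mul h2 hMp
  have h2M : (2 * M) ^ p = 2 * c := by
    rw [ENNReal.mul_rpow_of_nonneg _ _ (by linarith), ENNReal.rpow_eq_mul_rpow_sub_one hp 2,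
      mul_assoc]
  calc X + Y ≤ B + 2 ^ (p - 1) * (A + M ^ p * B) := add_le_add hX hY
    _ = 2 ^ (p - 1) * A + (B + c * B) := by ring
    _ ≤ c * A + (c * B + c * B) := by
        gcongr
        · exact le_mul_of_one_le_right' hMp
        · exact le_mul_of_one_le_left' hc
    _ ≤ (2 * M) ^ p * (A + B) := by
        rw [h2M, two_mul, add_mul, mul_add, add_assoc]
        gcongr
        exact le_add_self

noncomputable def cellIndex (lam : ℤ → ℝ) (t : ℝ) : ℤ :=
  sSup {n | lam n ≤ t}

namespace GoodSeq

variable {lam : ℤ → ℝ}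

lemma bddAbove_setOf_le (hlam : GoodSeq lam) (t : ℝ) : BddAbove {n | lam n ≤ t} := by
  obtain ⟨m, hm⟩ := (hlam.2.2.eventually_gt_atTop t).exists
  exact ⟨m, fun n hn => not_lt.1 fun hmn => (hm.trans (hlam.1 hmn)).not_ge hn⟩

lemma nonempty_setOf_le (hlam : GoodSeq lam) (t : ℝ) : {n | lam n ≤ t}.Nonempty :=
  (hlam.2.1.eventually_le_atBot t).exists

lemma cellIndex_eq_iff (hlam : GoodSeq lam) {t : ℝ} {n : ℤ} :
    cellIndex lam t = n ↔ t ∈ Ico (lam n) (lam (n + 1)) := by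
  have hbdd := hlam.bddAbove_setOf_le t
  constructor
  · rintro rfl
    refine ⟨Int.csSup_mem (hlam.nonempty_setOf_le t) hbdd, not_le.1 fun h => ?_⟩
    exact (lt_add_one (cellIndex lam t)).not_ge (le_csSup hbdd h)
  · rintro ⟨hn, hn'⟩
    refine le_antisymm ?_ (le_csSup hbdd hn)
    refine not_lt.1 fun h => hn'.not_ge ?_
    exact (hlam.1.monotone (Int.add_one_le_of_lt h)).trans
      (Int.csSup_mem (hlam.nonempty_setOf_le t) hbdd)

lemma mem_Ico_cellIndex (hlam : GoodSeq lam) (t : ℝ) :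
    t ∈ Ico (lam (cellIndex lam t)) (lam (cellIndex lam t + 1)) :=
  hlam.cellIndex_eq_iff.1 rfl

lemma monotone_cellIndex (hlam : GoodSeq lam) : Monotone (cellIndex lam) := fun _ t hst =>
  csSup_le_csSup (hlam.bddAbove_setOf_le t) (hlam.nonempty_setOf_le _)
    fun _ hn => le_trans hn hst

lemma measurable_cellIndex (hlam : GoodSeq lam) : Measurable (cellIndex lam) := by
  refine measurable_to_countable' fun n => ?_
  convert (measurableSet_Ico : MeasurableSet (Ico (lam n) (lam (n + 1))))
  ext t
  exact hlam.cellIndex_eq_iff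

lemma lintegral_eq_tsum_Ico (hlam : GoodSeq lam) (g : ℝ → ℝ≥0∞) :
    ∫⁻ t, g t = ∑' n, ∫⁻ t in Ico (lam n) (lam (n + 1)), g t := by
  have hcover : (⋃ n, Ico (lam n) (lam (n + 1))) = univ :=
    eq_univ_of_forall fun t => mem_iUnion.2 ⟨_, hlam.mem_Ico_cellIndex t⟩
  have hdisj : Pairwise (Function.onFun Disjoint fun n => Ico (lam n) (lam (n + 1))) := by
    simpa only [Order.succ_eq_add_one] using hlam.1.monotone.pairwise_disjoint_on_Ico_succ
  rw [← setLIntegral_univ, ← hcover, lintegral_iUnion (fun _ => measurableSet_Ico) hdisj]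

lemma tsum_setLIntegral_Ioc_le (hlam : GoodSeq lam) (g : ℝ → ℝ≥0∞) :
    ∑' n, ∫⁻ t in Ioc (lam n) (lam (n + 1)), g t ≤ ∫⁻ t, g t := by
  have hdisj : Pairwise (Function.onFun Disjoint fun n => Ioc (lam n) (lam (n + 1))) := by
    simpa only [Order.succ_eq_add_one] using hlam.1.monotone.pairwise_disjoint_on_Ioc_succ
  rw [← lintegral_iUnion (fun _ => measurableSet_Ioc) hdisj]
  exact setLIntegral_le_lintegral _ _

end GoodSeq

noncomputable def linearInterpSlope (lam : ℤ → ℝ) (f : ℤ → ℂ) (t : ℝ) : ℂ :=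
  dd1 lam f (cellIndex lam t)

-- Defined as a primitive of the slope, so that continuity and the fundamental theorem of calculus
-- are immediate; `GoodSeq.linearInterp_eq` identifies it with the piecewise linear interpolant.
noncomputable def linearInterp (lam : ℤ → ℝ) (f : ℤ → ℂ) (t : ℝ) : ℂ :=
  f 0 + ∫ s in lam 0..t, linearInterpSlope lam f s

namespace GoodSeq

variable {lam : ℤ → ℝ} (hlam : GoodSeq lam) (f : ℤ → ℂ)
include hlam

lemma linearInterpSlope_eq {n : ℤ} {t : ℝ} (ht : t ∈ Ico (lam n) (lam (n + 1))) :
    linearInterpSlope lam f t = dd1 lam f n := by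
  rw [linearInterpSlope, hlam.cellIndex_eq_iff.2 ht]

lemma locallyIntegrable_linearInterpSlope : LocallyIntegrable (linearInterpSlope lam f) := by
  have hmeas : Measurable (linearInterpSlope lam f) :=
    (measurable_of_countable (dd1 lam f)).comp hlam.measurable_cellIndex
  have hIcc : ∀ a b, IntegrableOn (linearInterpSlope lam f) (Icc a b) := fun a b =>
    Measure.integrableOn_of_bounded
      (M := ∑ k ∈ Finset.Icc (cellIndex lam a) (cellIndex lam b), ‖dd1 lam f k‖)
      (by simp) hmeas.aestronglyMeasurable <|
      (ae_restrict_iff' measurableSet_Icc).2 <| .of_forall fun t ht =>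
        Finset.single_le_sum (f := fun k => ‖dd1 lam f k‖) (fun _ _ => norm_nonneg _)
          (Finset.mem_Icc.2 ⟨hlam.monotone_cellIndex ht.1, hlam.monotone_cellIndex ht.2⟩)
  exact locallyIntegrable_iff.2 fun k hk =>
    (hIcc _ _).mono_set (subset_Icc_csInf_csSup hk.bddBelow hk.bddAbove)

lemma intervalIntegrable_linearInterpSlope (a b : ℝ) :
    IntervalIntegrable (linearInterpSlope lam f) volume a b :=
  ((hlam.locallyIntegrable_linearInterpSlope f).integrableOn_isCompact
    isCompact_uIcc).intervalIntegrable

lemma integral_linearInterpSlope {n : ℤ} {x y : ℝ} (hx : lam n ≤ x) (hxy : x ≤ y)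
    (hy : y ≤ lam (n + 1)) :
    ∫ s in x..y, linearInterpSlope lam f s = (y - x) • dd1 lam f n := by
  rw [intervalIntegral.integral_of_le hxy, integral_Ioc_eq_integral_Ioo,
    setIntegral_congr_fun measurableSet_Ioo (g := fun _ => dd1 lam f n)
      fun s hs => hlam.linearInterpSlope_eq f ⟨hx.trans hs.1.le, hs.2.trans_le hy⟩,
    setIntegral_const, Real.volume_real_Ioo_of_le hxy]

lemma linearInterp_lam (n : ℤ) : linearInterp lam f (lam n) = f n := by
  have hstep : ∀ k : ℤ, ∫ s in lam k..lam (k + 1), linearInterpSlope lam f s =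
      f (k + 1) - f k := fun k => by
    have hk : ((lam (k + 1) - lam k : ℝ) : ℂ) ≠ 0 :=
      Complex.ofReal_ne_zero.2 (sub_ne_zero.2 (hlam.1 (lt_add_one k)).ne')
    rw [hlam.integral_linearInterpSlope f le_rfl (hlam.1 (lt_add_one k)).le le_rfl,
      Complex.real_smul, dd1, mul_div_cancel₀ _ hk]
  have hadj := fun k => intervalIntegral.integral_add_adjacent_intervals
    (hlam.intervalIntegrable_linearInterpSlope f (lam 0) (lam k))
    (hlam.intervalIntegrable_linearInterpSlope f (lam k) (lam (k + 1)))
  induction n using Int.induction_on with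
  | zero => simp [linearInterp]
  | succ k ih =>
    rw [linearInterp, ← hadj, hstep]
    rw [linearInterp] at ih
    linear_combination ih
  | pred k ih =>
    have h := hadj (-k - 1)
    have h' := hstep (-k - 1)
    rw [sub_add_cancel] at h h'
    rw [linearInterp] at ih ⊢
    linear_combination ih + h - h'

lemma linearInterp_eq {n : ℤ} {t : ℝ} (ht : t ∈ Ico (lam n) (lam (n + 1))) :
    linearInterp lam f t = f n + (t - lam n) • dd1 lam f n := by
  rw [← hlam.linearInterp_lam f n, linearInterp, linearInterp, add_assoc,
    ← hlam.integral_linearInterpSlope f le_rfl ht.1 ht.2.le,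
    intervalIntegral.integral_add_adjacent_intervals
      (hlam.intervalIntegrable_linearInterpSlope f _ _)
      (hlam.intervalIntegrable_linearInterpSlope f _ _)]

lemma admissibleExt_linearInterp :
    AdmissibleExt 1 lam f (linearInterp lam f) (linearInterpSlope lam f) := by
  refine ⟨contDiff_zero.2 ?_, hlam.locallyIntegrable_linearInterpSlope f, fun a b _ => ?_,
    hlam.linearInterp_lam f⟩
  · exact continuous_const.add <| intervalIntegral.continuous_primitive
      (hlam.intervalIntegrable_linearInterpSlope f) _
  · rw [Nat.sub_self, iteratedDeriv_zero, linearInterp, linearInterp,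
      ← intervalIntegral.integral_add_adjacent_intervals
        (hlam.intervalIntegrable_linearInterpSlope f (lam 0) a)
        (hlam.intervalIntegrable_linearInterpSlope f a b)]
    ring

end GoodSeq

section IntervalEstimates

variable {E : Type*} [NormedAddCommGroup E] [NormedSpace ℝ E] {p a b : ℝ}

lemma setLIntegral_enorm_add_smul_rpow_le (hp : 1 ≤ p) (hab : a ≤ b) (c d : E) :
    ∫⁻ t in Ico a b, ‖c + (t - a) • d‖ₑ ^ p ≤
      2 ^ (p - 1) * (ENNReal.ofReal ((b - a) * ‖c‖ ^ p) +
        ENNReal.ofReal (b - a) ^ p * ENNReal.ofReal ((b - a) * ‖d‖ ^ p)) := by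
  have hp0 : 0 ≤ p := zero_le_one.trans hp
  have hpt : ∀ t ∈ Ico a b, ‖c + (t - a) • d‖ₑ ^ p ≤
      2 ^ (p - 1) * (‖c‖ₑ ^ p + (ENNReal.ofReal (b - a) * ‖d‖ₑ) ^ p) := fun t ht => by
    have hle : ‖c + (t - a) • d‖ₑ ≤ ‖c‖ₑ + ENNReal.ofReal (b - a) * ‖d‖ₑ := by
      refine (enorm_add_le _ _).trans (add_le_add le_rfl ?_)
      rw [enorm_smul, Real.enorm_eq_ofReal_abs, abs_of_nonneg (sub_nonneg.2 ht.1)]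
      gcongr
      exact ht.2.le
    exact (ENNReal.rpow_le_rpow hle hp0).trans (ENNReal.rpow_add_le_mul_rpow_add_rpow _ _ hp)
  calc ∫⁻ t in Ico a b, ‖c + (t - a) • d‖ₑ ^ p
      ≤ ∫⁻ _ in Ico a b, 2 ^ (p - 1) * (‖c‖ₑ ^ p + (ENNReal.ofReal (b - a) * ‖d‖ₑ) ^ p) :=
        setLIntegral_mono' measurableSet_Ico hpt
    _ = _ := by
        rw [setLIntegral_const, Real.volume_Ico, ENNReal.ofReal_mul (sub_nonneg.2 hab),
          ENNReal.ofReal_mul (sub_nonneg.2 hab), ofReal_norm_rpow hp0, ofReal_norm_rpow hp0,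
          ENNReal.mul_rpow_of_nonneg _ _ hp0]
        ring

variable {g : ℝ → E}

lemma ofReal_mul_norm_integral_div_rpow_le (hp : 1 ≤ p) (hab : a < b)
    (hg : AEStronglyMeasurable g (volume.restrict (Ioc a b))) :
    ENNReal.ofReal ((b - a) * (‖∫ t in a..b, g t‖ / (b - a)) ^ p) ≤
      ∫⁻ t in Ioc a b, ‖g t‖ₑ ^ p := by
  have hp0 : 0 ≤ p := zero_le_one.trans hp
  have hba : 0 < b - a := sub_pos.2 hab
  have hX : ‖∫ t in a..b, g t‖ₑ ^ p ≤
      ENNReal.ofReal (b - a) ^ (p - 1) * ∫⁻ t in Ioc a b, ‖g t‖ₑ ^ p := by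
    refine (ENNReal.rpow_le_rpow ?_ hp0).trans ((rpow_lintegral_enorm_le hp hg).trans_eq ?_)
    · rw [intervalIntegral.integral_of_le hab.le]
      exact enorm_integral_le_lintegral_enorm _
    · rw [Measure.restrict_apply_univ, Real.volume_Ioc]
  have hreal : (b - a) * (‖∫ t in a..b, g t‖ / (b - a)) ^ p =
      ‖∫ t in a..b, g t‖ ^ p / (b - a) ^ (p - 1) := by
    rw [Real.div_rpow (norm_nonneg _) hba.le, Real.rpow_sub_one hba.ne']
    field_simp
  rw [hreal, ENNReal.ofReal_div_of_pos (Real.rpow_pos_of_pos hba _), ofReal_norm_rpow hp0,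
    ← ENNReal.ofReal_rpow_of_nonneg hba.le (by linarith)]
  exact ENNReal.div_le_of_le_mul (hX.trans_eq (mul_comm _ _))

lemma ofReal_mul_norm_rpow_le (hp : 1 ≤ p) (hab : a < b)
    (hg : AEStronglyMeasurable g (volume.restrict (Ioc a b))) {F : ℝ → E}
    (hF : ∀ t ∈ Ioc a b, F t - F a = ∫ s in a..t, g s) :
    ENNReal.ofReal ((b - a) * ‖F a‖ ^ p) ≤
      2 ^ (p - 1) * ((∫⁻ t in Ioc a b, ‖F t‖ₑ ^ p) +
        ENNReal.ofReal (b - a) ^ p * ∫⁻ t in Ioc a b, ‖g t‖ₑ ^ p) := by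
  have hp0 : 0 ≤ p := zero_le_one.trans hp
  set h := ENNReal.ofReal (b - a)
  set L := ∫⁻ t in Ioc a b, ‖g t‖ₑ
  have hpt : ∀ t ∈ Ioc a b, ‖F a‖ₑ ^ p ≤ 2 ^ (p - 1) * (‖F t‖ₑ ^ p + L ^ p) := fun t ht => by
    have hle : ‖F a‖ₑ ≤ ‖F t‖ₑ + L := calc
      ‖F a‖ₑ = ‖F t - (F t - F a)‖ₑ := by rw [sub_sub_cancel]
      _ ≤ ‖F t‖ₑ + ‖F t - F a‖ₑ := enorm_sub_le
      _ ≤ ‖F t‖ₑ + L := by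
          refine add_le_add le_rfl ?_
          rw [hF t ht, intervalIntegral.integral_of_le ht.1.le]
          exact (enorm_integral_le_lintegral_enorm _).trans
            (lintegral_mono_set (Ioc_subset_Ioc_right ht.2))
    exact (ENNReal.rpow_le_rpow hle hp0).trans (ENNReal.rpow_add_le_mul_rpow_add_rpow _ _ hp)
  have hL : h * L ^ p ≤ h ^ p * ∫⁻ t in Ioc a b, ‖g t‖ₑ ^ p := calc
    h * L ^ p ≤ h * (h ^ (p - 1) * ∫⁻ t in Ioc a b, ‖g t‖ₑ ^ p) := by
        gcongr
        exact (rpow_lintegral_enorm_le hp hg).trans_eq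
          (by rw [Measure.restrict_apply_univ, Real.volume_Ioc])
    _ = h ^ p * ∫⁻ t in Ioc a b, ‖g t‖ₑ ^ p := by
        rw [← mul_assoc, ← ENNReal.rpow_eq_mul_rpow_sub_one hp]
  calc ENNReal.ofReal ((b - a) * ‖F a‖ ^ p) = ∫⁻ _ in Ioc a b, ‖F a‖ₑ ^ p := by
        rw [setLIntegral_const, Real.volume_Ioc, ENNReal.ofReal_mul (sub_pos.2 hab).le,
          ofReal_norm_rpow hp0, mul_comm]
    _ ≤ ∫⁻ t in Ioc a b, 2 ^ (p - 1) * (‖F t‖ₑ ^ p + L ^ p) :=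
        setLIntegral_mono' measurableSet_Ioc hpt
    _ = 2 ^ (p - 1) * ((∫⁻ t in Ioc a b, ‖F t‖ₑ ^ p) + h * L ^ p) := by
        rw [lintegral_const_mul' _ _ (by simp), lintegral_add_right _ measurable_const,
          setLIntegral_const, Real.volume_Ioc, mul_comm (L ^ p)]
    _ ≤ _ := by gcongr

end IntervalEstimates

-- The `r = 1` case of `eqWp`, with `ddiv lam f n 1` written as `dd1 lam f n`.
noncomputable def eqW1p (p : ℝ) (lam : ℤ → ℝ) (f : ℤ → ℂ) : ℝ≥0∞ :=
  (∑' n : ℤ, ENNReal.ofReal ((lam (n + 1) - lam n) * ‖dd1 lam f n‖ ^ p)) +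
    ∑' n : ℤ, ENNReal.ofReal ((lam (n + 1) - lam n) * ‖f n‖ ^ p)

namespace GoodSeq

variable {lam : ℤ → ℝ} {p M : ℝ}

lemma eqW1p_le_of_admissibleExt_one (hlam : GoodSeq lam) (hp : 1 ≤ p)
    (hstep : ∀ n : ℤ, lam (n + 1) - lam n ≤ M) {f : ℤ → ℂ} {F G : ℝ → ℂ}
    (hFG : AdmissibleExt 1 lam f F G) :
    eqW1p p lam f ≤
      ENNReal.ofReal (2 * max 1 M) ^ p * ((∫⁻ t, ‖F t‖ₑ ^ p) + ∫⁻ t, ‖G t‖ₑ ^ p) := by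
  obtain ⟨-, hGloc, hFTC, hFlam⟩ := hFG
  simp only [Nat.sub_self, iteratedDeriv_zero] at hFTC
  have hlt : ∀ n : ℤ, lam n < lam (n + 1) := fun n => hlam.1 (lt_add_one n)
  have hGm : ∀ n : ℤ, AEStronglyMeasurable G (volume.restrict (Ioc (lam n) (lam (n + 1)))) :=
    fun n => ((hGloc.integrableOn_isCompact isCompact_Icc).mono_set
      Ioc_subset_Icc_self).aestronglyMeasurable
  have hslope : (∑' n : ℤ, ENNReal.ofReal ((lam (n + 1) - lam n) * ‖dd1 lam f n‖ ^ p)) ≤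
      ∫⁻ t, ‖G t‖ₑ ^ p := by
    refine (ENNReal.tsum_le_tsum fun n => ?_).trans (hlam.tsum_setLIntegral_Ioc_le _)
    convert ofReal_mul_norm_integral_div_rpow_le hp (hlt n) (hGm n) using 4
    rw [← hFTC _ _ (hlt n).le, hFlam, hFlam, dd1, norm_div, Complex.norm_real,
      Real.norm_of_nonneg (sub_pos.2 (hlt n)).le]
  have hvalue : (∑' n : ℤ, ENNReal.ofReal ((lam (n + 1) - lam n) * ‖f n‖ ^ p)) ≤
      2 ^ (p - 1) * ((∫⁻ t, ‖F t‖ₑ ^ p) + ENNReal.ofReal (max 1 M) ^ p * ∫⁻ t, ‖G t‖ₑ ^ p) :=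
    calc (∑' n : ℤ, ENNReal.ofReal ((lam (n + 1) - lam n) * ‖f n‖ ^ p))
        ≤ ∑' n : ℤ, 2 ^ (p - 1) * ((∫⁻ t in Ioc (lam n) (lam (n + 1)), ‖F t‖ₑ ^ p) +
            ENNReal.ofReal (max 1 M) ^ p * ∫⁻ t in Ioc (lam n) (lam (n + 1)), ‖G t‖ₑ ^ p) := by
          refine ENNReal.tsum_le_tsum fun n => ?_
          rw [← hFlam n]
          refine (ofReal_mul_norm_rpow_le hp (hlt n) (hGm n)
            fun t ht => hFTC _ _ ht.1.le).trans ?_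
          gcongr
          exact (hstep n).trans (le_max_right _ _)
      _ = 2 ^ (p - 1) * ((∑' n : ℤ, ∫⁻ t in Ioc (lam n) (lam (n + 1)), ‖F t‖ₑ ^ p) +
            ENNReal.ofReal (max 1 M) ^ p *
              ∑' n : ℤ, ∫⁻ t in Ioc (lam n) (lam (n + 1)), ‖G t‖ₑ ^ p) := by
          rw [ENNReal.tsum_mul_left, ENNReal.tsum_add, ENNReal.tsum_mul_left]
      _ ≤ _ := by gcongr <;> exact hlam.tsum_setLIntegral_Ioc_le _
  rw [eqW1p, ENNReal.ofReal_mul zero_le_two, ENNReal.ofReal_ofNat]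
  exact add_le_two_mul_rpow_mul_add hp (by simp) hslope hvalue

lemma lintegral_linearInterp_add_le (hlam : GoodSeq lam) (hp : 1 ≤ p)
    (hstep : ∀ n : ℤ, lam (n + 1) - lam n ≤ M) (f : ℤ → ℂ) :
    (∫⁻ t, ‖linearInterp lam f t‖ₑ ^ p) + ∫⁻ t, ‖linearInterpSlope lam f t‖ₑ ^ p ≤
      ENNReal.ofReal (2 * max 1 M) ^ p * eqW1p p lam f := by
  have hp0 : 0 ≤ p := zero_le_one.trans hp
  have hle : ∀ n : ℤ, lam n ≤ lam (n + 1) := fun n => (hlam.1 (lt_add_one n)).le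
  have hslope : ∫⁻ t, ‖linearInterpSlope lam f t‖ₑ ^ p =
      ∑' n : ℤ, ENNReal.ofReal ((lam (n + 1) - lam n) * ‖dd1 lam f n‖ ^ p) := by
    rw [hlam.lintegral_eq_tsum_Ico]
    refine tsum_congr fun n => ?_
    rw [setLIntegral_congr_fun measurableSet_Ico fun t ht => by
        rw [hlam.linearInterpSlope_eq f ht],
      setLIntegral_const, Real.volume_Ico, ENNReal.ofReal_mul (sub_nonneg.2 (hle n)),
      ofReal_norm_rpow hp0, mul_comm]
  have hvalue : ∫⁻ t, ‖linearInterp lam f t‖ₑ ^ p ≤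
      2 ^ (p - 1) * ((∑' n : ℤ, ENNReal.ofReal ((lam (n + 1) - lam n) * ‖f n‖ ^ p)) +
        ENNReal.ofReal (max 1 M) ^ p *
          ∑' n : ℤ, ENNReal.ofReal ((lam (n + 1) - lam n) * ‖dd1 lam f n‖ ^ p)) := by
    rw [hlam.lintegral_eq_tsum_Ico, ← ENNReal.tsum_mul_left, ← ENNReal.tsum_add,
      ← ENNReal.tsum_mul_left]
    refine ENNReal.tsum_le_tsum fun n => ?_
    rw [setLIntegral_congr_fun measurableSet_Ico fun t ht => by
      rw [hlam.linearInterp_eq f ht]]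
    refine (setLIntegral_enorm_add_smul_rpow_le hp (hle n) _ _).trans ?_
    gcongr
    exact (hstep n).trans (le_max_right _ _)
  rw [eqW1p, ENNReal.ofReal_mul zero_le_two, ENNReal.ofReal_ofNat, add_comm,
    add_comm (∑' n : ℤ, _)]
  exact add_le_two_mul_rpow_mul_add hp (by simp) hslope.le hvalue

lemma inv_mul_le_traceW_one (hlam : GoodSeq lam) (hp : 1 ≤ p)
    (hstep : ∀ n : ℤ, lam (n + 1) - lam n ≤ M) (f : ℤ → ℂ) :
    (ENNReal.ofReal (2 * max 1 M))⁻¹ * eqW1p p lam f ^ (1 / p) ≤ traceW 1 p lam f := by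
  have hp0 : 0 < p := one_pos.trans_le hp
  have hC : ENNReal.ofReal (2 * max 1 M) ≠ 0 := by simp
  refine le_iInf fun F => le_iInf fun G => le_iInf fun hFG => ?_
  simp only [ofReal_norm_rpow hp0.le]
  rw [ENNReal.inv_mul_le_iff hC ENNReal.ofReal_ne_top]
  exact ENNReal.rpow_one_div_le_mul hp0 (hlam.eqW1p_le_of_admissibleExt_one hp hstep hFG)

lemma traceW_one_le (hlam : GoodSeq lam) (hp : 1 ≤ p)
    (hstep : ∀ n : ℤ, lam (n + 1) - lam n ≤ M) (f : ℤ → ℂ) :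
    traceW 1 p lam f ≤ ENNReal.ofReal (2 * max 1 M) * eqW1p p lam f ^ (1 / p) := by
  have hp0 : 0 < p := one_pos.trans_le hp
  refine iInf₂_le_of_le (linearInterp lam f) (linearInterpSlope lam f) <|
    iInf_le_of_le (hlam.admissibleExt_linearInterp f) ?_
  simp only [ofReal_norm_rpow hp0.le]
  exact ENNReal.rpow_one_div_le_mul hp0 (hlam.lintegral_linearInterp_add_le hp hstep f)

end GoodSeq

theorem stmt4_general (K : ℝ) :
    ∃ c C : ℝ, 0 < c ∧ c ≤ C ∧
      ∀ p : ℝ, 1 ≤ p → ∀ lam : ℤ → ℝ, GoodSeq lam →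
        (∀ n : ℤ, lam (n + 1) - lam n ≤ K) → ∀ f : ℤ → ℂ,
        ENNReal.ofReal c *
            ((∑' n : ℤ, ENNReal.ofReal ((lam (n + 1) - lam n) *
                ‖dd1 lam f n‖ ^ p)) +
              ∑' n : ℤ, ENNReal.ofReal ((lam (n + 1) - lam n) *
                ‖f n‖ ^ p)) ^ (1 / p) ≤ traceW 1 p lam f ∧
        traceW 1 p lam f ≤
          ENNReal.ofReal C *
            ((∑' n : ℤ, ENNReal.ofReal ((lam (n + 1) - lam n) *
                ‖dd1 lam f n‖ ^ p)) +
              ∑' n : ℤ, ENNReal.ofReal ((lam (n + 1) - lam n) *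
                ‖f n‖ ^ p)) ^ (1 / p) := by
  have hC : 1 ≤ 2 * max 1 K := by linarith [le_max_left 1 K]
  refine ⟨(2 * max 1 K)⁻¹, 2 * max 1 K, by positivity, (inv_le_one_of_one_le₀ hC).trans hC,
    fun p hp lam hlam hstep f => ⟨?_, hlam.traceW_one_le hp hstep f⟩⟩
  rw [ENNReal.ofReal_inv_of_pos (by positivity)]
  exact hlam.inv_mul_le_traceW_one hp hstep f

/-- for every `K > 0`, equivalence (constants depending only on `K`) of
`‖·‖_{W^1_p|Λ}` with `(∑_n (λ_{n+1}-λ_n)|f[λ_n,λ_{n+1}]|^p + ∑_n (λ_{n+1}-λ_n)|f_n|^p)^{1/p}`,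
for sequences with steps bounded by `K`. -/
theorem stmt4 (K : ℝ) (hK : 0 < K) :
    ∃ c C : ℝ, 0 < c ∧ c ≤ C ∧
      ∀ p : ℝ, 1 ≤ p → ∀ lam : ℤ → ℝ, GoodSeq lam →
        (∀ n : ℤ, lam (n + 1) - lam n ≤ K) → ∀ f : ℤ → ℂ,
        ENNReal.ofReal c *
            ((∑' n : ℤ, ENNReal.ofReal ((lam (n + 1) - lam n) *
                ‖dd1 lam f n‖ ^ p)) +
              ∑' n : ℤ, ENNReal.ofReal ((lam (n + 1) - lam n) *
                ‖f n‖ ^ p)) ^ (1 / p) ≤ traceW 1 p lam f ∧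
        traceW 1 p lam f ≤
          ENNReal.ofReal C *
            ((∑' n : ℤ, ENNReal.ofReal ((lam (n + 1) - lam n) *
                ‖dd1 lam f n‖ ^ p)) +
              ∑' n : ℤ, ENNReal.ofReal ((lam (n + 1) - lam n) *
                ‖f n‖ ^ p)) ^ (1 / p) :=
  stmt4_general K
end
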